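/- arXiv:2508.15613 — 3 statements merged into one kernel-verified Lean document; each statement's English description precedes it below -/
import Mathlib

section
/- Let x ↦ r_i(x) for i = 1,...,N be convex nonnegative functions on a convex set X ⊆ ℝⁿ, and suppose r_min^i ≤ r_i(x) ≤ r_max^i for all x ∈ X. Define o_i = 1 if r_min^i > ε², else 0; and w_i = (ε² - r_min^i)/(r_max^i - r_min^i) if r_max^i > ε² ≥ r_min^i (with r_max^i > r_min^i), w_i = 1 otherwise. Then the function x ↦ Σᵢ (1 - o_i)(w_i r_i(x) + (1 - w_i) r_min^i) + Σᵢ o_i ε² is convex on X and satisfies, for all x ∈ X: Σᵢ (1 - o_i)(w_i r_i(x) + (1 - w_i) r_min^i) + Σᵢ o_i ε² ≤ Σᵢ min(r_i(x), ε²). -/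
/-!
The map `t ↦ min t c` is concave, so on an interval `[lo, hi]` it lies above its chord. If
`c < lo` the chord is the constant `c`, if `hi ≤ c` it is the identity, and otherwise it is
`t ↦ w t + (1 - w) lo` with `w = (c - lo) / (hi - lo) ∈ [0, 1]`. Each chord is a nondecreasing
affine function of `t`, so composing it with the convex residual `rᵢ` and summing over `i` gives a
convex function, and the chord bound holds termwise because `rᵢ x ∈ [rminᵢ, rmaxᵢ]` on `X`.
-/

theorem ConvexOn.sum {𝕜 E β ι : Type*} [Semiring 𝕜] [PartialOrder 𝕜] [AddCommMonoid E]
    [AddCommMonoid β] [PartialOrder β] [IsOrderedAddMonoid β] [SMul 𝕜 E] [Module 𝕜 β]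
    {s : Set E} {t : Finset ι} {f : ι → E → β} (hs : Convex 𝕜 s)
    (hf : ∀ i ∈ t, ConvexOn 𝕜 s (f i)) : ConvexOn 𝕜 s fun x => ∑ i ∈ t, f i x := by
  simpa only [← Finset.sum_apply] using
    Finset.sum_induction f (ConvexOn 𝕜 s) (fun _ _ => ConvexOn.add) (convexOn_const 0 hs) hf

theorem ConvexOn.mul_mul_add_const {𝕜 E : Type*} [CommRing 𝕜] [PartialOrder 𝕜]
    [IsOrderedRing 𝕜] [AddCommMonoid E] [Module 𝕜 E] {s : Set E} {f : E → 𝕜}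
    (hf : ConvexOn 𝕜 s f) {a b : 𝕜} (hab : 0 ≤ a * b) (c : 𝕜) :
    ConvexOn 𝕜 s fun x => a * (b * f x + c) :=
  ((hf.smul hab).add_const (a * c)).congr fun x _ => by simp only [Pi.add_apply, smul_eq_mul]; ring

section TruncationChord

variable {c lo hi t o w : ℝ}

theorem chord_le_min_of_mem_Icc (hlo : lo ≤ c) (hhi : c < hi) (ht : t ∈ Set.Icc lo hi) :
    (c - lo) / (hi - lo) * t + (1 - (c - lo) / (hi - lo)) * lo ≤ min t c := by
  obtain ⟨htlo, hthi⟩ := ht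
  have hd : 0 < hi - lo := by linarith
  set θ := (c - lo) / (hi - lo)
  have hθ₀ : 0 ≤ θ := div_nonneg (by linarith) hd.le
  have hθ₁ : θ ≤ 1 := (div_le_one hd).2 (by linarith)
  have hθd : θ * (hi - lo) = c - lo := div_mul_cancel₀ _ hd.ne'
  refine le_min (by nlinarith) ?_
  calc θ * t + (1 - θ) * lo = lo + θ * (t - lo) := by ring
    _ ≤ lo + θ * (hi - lo) := by gcongr
    _ = c := by linarith

theorem relaxed_term_coeff_nonneg (ho : o = if lo > c then 1 else 0)
    (hw : w = if hi > c ∧ lo ≤ c then (c - lo) / (hi - lo) else 1) :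
    0 ≤ (1 - o) * w := by
  subst ho hw
  by_cases h₁ : lo > c
  · simp [h₁]
  by_cases h₂ : hi > c ∧ lo ≤ c
  · simpa [h₁, h₂] using div_nonneg (sub_nonneg.2 h₂.2) (by linarith [h₂.1, h₂.2])
  · simp [h₁, h₂]

theorem relaxed_term_le_min (ho : o = if lo > c then 1 else 0)
    (hw : w = if hi > c ∧ lo ≤ c then (c - lo) / (hi - lo) else 1) (ht : lo ≤ t ∧ t ≤ hi) :
    (1 - o) * (w * t + (1 - w) * lo) + o * c ≤ min t c := by
  subst ho hw
  by_cases h₁ : lo > c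
  · simpa [h₁] using le_of_lt (h₁.trans_le ht.1)
  by_cases h₂ : hi > c ∧ lo ≤ c
  · simpa [h₁, h₂] using chord_le_min_of_mem_Icc h₂.2 h₂.1 ht
  · have htc : t ≤ c := ht.2.trans (not_lt.1 fun h => h₂ ⟨h, not_lt.1 h₁⟩)
    simp [h₁, h₂, htc]

end TruncationChord

theorem stmt_1_general (n N : ℕ) (X : Set (EuclideanSpace ℝ (Fin n))) (hX : Convex ℝ X)
    (r : Fin N → EuclideanSpace ℝ (Fin n) → ℝ)
    (hconv : ∀ i, ConvexOn ℝ X (r i))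
    (rmin rmax : Fin N → ℝ)
    (hbound : ∀ i, ∀ x ∈ X, rmin i ≤ r i x ∧ r i x ≤ rmax i)
    (ε : ℝ)
    (o : Fin N → ℝ) (ho : ∀ i, o i = if rmin i > ε ^ 2 then 1 else 0)
    (w : Fin N → ℝ)
    (hw : ∀ i, w i = if rmax i > ε ^ 2 ∧ rmin i ≤ ε ^ 2 then
      (ε ^ 2 - rmin i) / (rmax i - rmin i) else 1) :
    ConvexOn ℝ X (fun x =>
      (∑ i, (1 - o i) * (w i * r i x + (1 - w i) * rmin i)) + ∑ i, o i * ε ^ 2) ∧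
    ∀ x ∈ X,
      (∑ i, (1 - o i) * (w i * r i x + (1 - w i) * rmin i)) + ∑ i, o i * ε ^ 2
        ≤ ∑ i, min (r i x) (ε ^ 2) := by
  refine ⟨(ConvexOn.sum hX fun i _ => (hconv i).mul_mul_add_const
    (relaxed_term_coeff_nonneg (ho i) (hw i)) _).add_const _, fun x hx => ?_⟩
  rw [← Finset.sum_add_distrib]
  exact Finset.sum_le_sum fun i _ => relaxed_term_le_min (ho i) (hw i) (hbound i x hx)

theorem stmt_1 (n N : ℕ) (X : Set (EuclideanSpace ℝ (Fin n))) (hX : Convex ℝ X)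
    (r : Fin N → EuclideanSpace ℝ (Fin n) → ℝ)
    (hconv : ∀ i, ConvexOn ℝ X (r i))
    (hnonneg : ∀ i, ∀ x ∈ X, 0 ≤ r i x)
    (rmin rmax : Fin N → ℝ)
    (hbound : ∀ i, ∀ x ∈ X, rmin i ≤ r i x ∧ r i x ≤ rmax i)
    (ε : ℝ) (hε : 0 < ε)
    (o : Fin N → ℝ) (ho : ∀ i, o i = if rmin i > ε ^ 2 then 1 else 0)
    (w : Fin N → ℝ)
    (hw : ∀ i, w i = if rmax i > ε ^ 2 ∧ rmin i ≤ ε ^ 2 then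
      (ε ^ 2 - rmin i) / (rmax i - rmin i) else 1) :
    ConvexOn ℝ X (fun x =>
      (∑ i, (1 - o i) * (w i * r i x + (1 - w i) * rmin i)) + ∑ i, o i * ε ^ 2) ∧
    ∀ x ∈ X,
      (∑ i, (1 - o i) * (w i * r i x + (1 - w i) * rmin i)) + ∑ i, o i * ε ^ 2
        ≤ ∑ i, min (r i x) (ε ^ 2) :=
  stmt_1_general n N X hX r hconv rmin rmax hbound ε o ho w hw
end

section
/- Let p, q ∈ ℝ³ be nonzero, R_c ∈ SO(3), θ = arccos(pᵀR_cᵀq / (‖p‖‖q‖)), and n_r ≥ 0. For every R ∈ SO(3) with geodesic (angular) distance d∠(R, R_c) ≤ n_r, the value ‖Rp - q‖² lies in the interval [‖p‖² + ‖q‖² - 2‖p‖‖q‖cos(max(θ - n_r, 0)), ‖p‖² + ‖q‖² - 2‖p‖‖q‖cos(min(θ + n_r, π))]. -/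
open Matrix

noncomputable def enorm3 (v : Fin 3 → ℝ) : ℝ := Real.sqrt (∑ i, (v i) ^ 2)

def IsSO3 (R : Matrix (Fin 3) (Fin 3) ℝ) : Prop :=
  R ∈ Matrix.orthogonalGroup (Fin 3) ℝ ∧ R.det = 1

/-- geodesic (angular) distance between two rotations -/
noncomputable def rotDist (R Rc : Matrix (Fin 3) (Fin 3) ℝ) : ℝ :=
  Real.arccos ((Matrix.trace (Rcᵀ * R) - 1) / 2)

/-!
For a rotation `S` with `tr S = 1 + 2 cos α`, the symmetric matrix `A = S + Sᵀ - 2 cos α`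
satisfies `A² = (3 - tr S) A` (Cayley–Hamilton), so it is positive semidefinite, i.e.
`⟪v, S v⟫ ≥ cos α ‖v‖²`: a rotation by `α` moves no vector through an angle larger than `α`.
Applied to `S = R_cᵀ R` and `v = p`, the angle between `R p` and `R_c p` is at most
`d∠(R, R_c) ≤ n_r`, so by the triangle inequality for angles `∠(R p, q)` lies within `n_r` of
`θ = ∠(R_c p, q)`. The law of cosines and the monotonicity of `cos` on `[0, π]` conclude.
-/

open InnerProductGeometry WithLp
open scoped Real RealInnerProductSpace

lemma Matrix.adjugate_fin_three_eq (M : Matrix (Fin 3) (Fin 3) ℝ) :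
    M.adjugate = M * M - M.trace • M + ((M.trace ^ 2 - (M * M).trace) / 2) • 1 := by
  ext i j
  fin_cases i <;> fin_cases j <;>
    simp [adjugate_fin_three, mul_apply, trace_fin_three, Fin.sum_univ_three] <;> ring

section Orthogonal

variable {n : Type*} [Fintype n]

lemma Matrix.dotProduct_mulVec_nonneg_of_mul_self_eq_smul {A : Matrix n n ℝ} (hA : Aᵀ = A)
    {c : ℝ} (hc : 0 ≤ c) (h : A * A = c • A) (v : n → ℝ) : 0 ≤ v ⬝ᵥ A *ᵥ v := by
  have hsq : A *ᵥ v ⬝ᵥ A *ᵥ v = c * (v ⬝ᵥ A *ᵥ v) := by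
    conv_lhs => rw [dotProduct_mulVec, ← vecMul_transpose, hA, vecMul_vecMul, h, vecMul_smul,
      smul_dotProduct, smul_eq_mul, ← dotProduct_mulVec]
  rcases hc.lt_or_eq with hc | rfl
  · exact nonneg_of_mul_nonneg_right (hsq ▸ dotProduct_self_star_nonneg (A *ᵥ v)) hc
  · rw [zero_mul, dotProduct_self_eq_zero] at hsq
    simp [hsq]

variable [DecidableEq n]

lemma Matrix.trace_le_card_of_mem_orthogonalGroup {S : Matrix n n ℝ}
    (hS : S ∈ orthogonalGroup n ℝ) : S.trace ≤ Fintype.card n := by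
  calc S.trace ≤ ∑ _i : n, (1 : ℝ) :=
        Finset.sum_le_sum fun i _ => (le_abs_self _).trans (entry_norm_bound_of_unitary hS i i)
    _ = Fintype.card n := by simp

lemma Matrix.mulVec_dotProduct_mulVec_of_mem_orthogonalGroup {S : Matrix n n ℝ}
    (hS : S ∈ orthogonalGroup n ℝ) (v w : n → ℝ) : S *ᵥ v ⬝ᵥ S *ᵥ w = v ⬝ᵥ w := by
  rw [dotProduct_mulVec, ← vecMul_transpose, vecMul_vecMul,
    (mem_orthogonalGroup_iff' (A := S)).mp hS, vecMul_one]

end Orthogonal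

namespace IsSO3

variable {R S : Matrix (Fin 3) (Fin 3) ℝ}

lemma transpose_mul_self (h : IsSO3 S) : Sᵀ * S = 1 :=
  (mem_orthogonalGroup_iff' (A := S)).mp h.1

lemma mul_transpose_self (h : IsSO3 S) : S * Sᵀ = 1 :=
  (mem_orthogonalGroup_iff (A := S)).mp h.1

lemma transpose_mul (hR : IsSO3 R) (hS : IsSO3 S) : IsSO3 (Rᵀ * S) := by
  refine ⟨(mem_orthogonalGroup_iff' (A := Rᵀ * S)).mpr ?_,
    by rw [det_mul, det_transpose, hR.2, hS.2, one_mul]⟩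
  rw [Matrix.transpose_mul, transpose_transpose, mul_assoc, ← mul_assoc R, hR.mul_transpose_self,
    one_mul, hS.transpose_mul_self]

lemma adjugate_eq_transpose (h : IsSO3 S) : S.adjugate = Sᵀ := by
  calc S.adjugate = Sᵀ * (S * S.adjugate) := by rw [← mul_assoc, h.transpose_mul_self, one_mul]
    _ = Sᵀ := by rw [mul_adjugate, h.2, one_smul, mul_one]

/-- Cayley–Hamilton with `adj S = Sᵀ`; taking traces shows that the middle coefficient of the
characteristic polynomial is `tr S`. -/
lemma mul_self_eq (h : IsSO3 S) : S * S = S.trace • S - S.trace • 1 + Sᵀ := by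
  have hadj := S.adjugate_fin_three_eq
  rw [h.adjugate_eq_transpose] at hadj
  have htr : (S.trace ^ 2 - (S * S).trace) / 2 = S.trace := by
    have := congrArg trace hadj
    simp only [trace_transpose, trace_add, trace_sub, trace_smul, trace_one, smul_eq_mul,
      Fintype.card_fin] at this
    linarith
  rw [htr] at hadj
  linear_combination (norm := module) -hadj

lemma mul_self_eq_smul (h : IsSO3 S) :
    (S + Sᵀ + (1 - S.trace) • 1) * (S + Sᵀ + (1 - S.trace) • 1) =
      (3 - S.trace) • (S + Sᵀ + (1 - S.trace) • 1) := by
  have hSS := h.mul_self_eq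
  have hSS' : Sᵀ * Sᵀ = S.trace • Sᵀ - S.trace • 1 + S := by
    simpa [Matrix.transpose_mul] using congrArg transpose hSS
  simp only [add_mul, mul_add, smul_mul_assoc, mul_smul_comm, mul_one, one_mul,
    h.mul_transpose_self, h.transpose_mul_self, hSS, hSS']
  module

lemma trace_sub_one_div_two_mul_le (h : IsSO3 S) (v : Fin 3 → ℝ) :
    (S.trace - 1) / 2 * (v ⬝ᵥ v) ≤ v ⬝ᵥ S *ᵥ v := by
  have hsymm : (S + Sᵀ + (1 - S.trace) • 1)ᵀ = S + Sᵀ + (1 - S.trace) • 1 := by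
    rw [transpose_add, transpose_add, transpose_transpose, transpose_smul, transpose_one,
      add_comm Sᵀ]
  have hnonneg := dotProduct_mulVec_nonneg_of_mul_self_eq_smul hsymm
    (by linarith [show S.trace ≤ 3 by simpa using trace_le_card_of_mem_orthogonalGroup h.1])
    h.mul_self_eq_smul v
  have hST : v ⬝ᵥ Sᵀ *ᵥ v = v ⬝ᵥ S *ᵥ v := by
    rw [dotProduct_mulVec, vecMul_transpose, dotProduct_comm]
  simp only [add_mulVec, smul_mulVec, one_mulVec, dotProduct_add, dotProduct_smul, hST,
    smul_eq_mul] at hnonneg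
  linarith

end IsSO3

section Euclidean

variable {n : Type*} [Fintype n]

lemma EuclideanSpace.real_inner_toLp_toLp (v w : n → ℝ) :
    ⟪toLp 2 v, toLp 2 w⟫ = v ⬝ᵥ w := by
  rw [EuclideanSpace.inner_toLp_toLp, star_trivial, dotProduct_comm]

lemma Matrix.norm_toLp_mulVec_of_mem_orthogonalGroup [DecidableEq n] {S : Matrix n n ℝ}
    (hS : S ∈ orthogonalGroup n ℝ) (v : n → ℝ) : ‖toLp 2 (S *ᵥ v)‖ = ‖toLp 2 v‖ := by
  rw [norm_eq_sqrt_real_inner, norm_eq_sqrt_real_inner, EuclideanSpace.real_inner_toLp_toLp,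
    EuclideanSpace.real_inner_toLp_toLp, mulVec_dotProduct_mulVec_of_mem_orthogonalGroup hS]

lemma enorm3_eq_norm (v : Fin 3 → ℝ) : enorm3 v = ‖toLp 2 v‖ := by
  simp [enorm3, EuclideanSpace.norm_eq]

lemma angle_toLp_mulVec_le_rotDist {R Rc : Matrix (Fin 3) (Fin 3) ℝ} (hR : IsSO3 R)
    (hRc : IsSO3 Rc) {p : Fin 3 → ℝ} (hp : p ≠ 0) :
    angle (toLp 2 (R *ᵥ p)) (toLp 2 (Rc *ᵥ p)) ≤ rotDist R Rc := by
  have hpos : 0 < ‖toLp 2 p‖ := norm_pos_iff.mpr (by simpa using hp)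
  rw [angle, rotDist, norm_toLp_mulVec_of_mem_orthogonalGroup hR.1,
    norm_toLp_mulVec_of_mem_orthogonalGroup hRc.1]
  refine Real.arccos_le_arccos ?_
  rw [le_div_iff₀ (by positivity), ← sq, ← real_inner_self_eq_norm_sq,
    EuclideanSpace.real_inner_toLp_toLp, EuclideanSpace.real_inner_toLp_toLp,
    dotProduct_comm (R *ᵥ p), dotProduct_mulVec, ← vecMul_transpose, vecMul_vecMul,
    ← dotProduct_mulVec]
  exact (hRc.transpose_mul hR).trace_sub_one_div_two_mul_le p

end Euclidean

lemma Real.cos_mem_Icc_of_abs_sub_le {φ θ r : ℝ} (h0 : 0 ≤ φ) (hπ : φ ≤ π) (h : |φ - θ| ≤ r) :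
    cos φ ∈ Set.Icc (cos (min (θ + r) π)) (cos (max (θ - r) 0)) := by
  rw [abs_sub_le_iff] at h
  exact ⟨cos_le_cos_of_nonneg_of_le_pi h0 (min_le_right _ _) (le_min (by linarith) hπ),
    cos_le_cos_of_nonneg_of_le_pi (le_max_right _ _) hπ (max_le (by linarith) h0)⟩

theorem stmt_4_general (p q : Fin 3 → ℝ) (hp : p ≠ 0)
    (Rc : Matrix (Fin 3) (Fin 3) ℝ) (hRc : IsSO3 Rc) (n_r : ℝ)
    (θ : ℝ) (hθ : θ = Real.arccos (p ⬝ᵥ (Rcᵀ.mulVec q) / (enorm3 p * enorm3 q))) :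
    ∀ R : Matrix (Fin 3) (Fin 3) ℝ, IsSO3 R → rotDist R Rc ≤ n_r →
      enorm3 (R.mulVec p - q) ^ 2 ∈ Set.Icc
        (enorm3 p ^ 2 + enorm3 q ^ 2 -
          2 * enorm3 p * enorm3 q * Real.cos (max (θ - n_r) 0))
        (enorm3 p ^ 2 + enorm3 q ^ 2 -
          2 * enorm3 p * enorm3 q * Real.cos (min (θ + n_r) Real.pi)) := by
  intro R hR hd
  set x := toLp 2 (R *ᵥ p)
  set u := toLp 2 (Rc *ᵥ p)
  set w := toLp 2 q
  have hθu : θ = angle u w := by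
    rw [hθ, angle, enorm3_eq_norm, enorm3_eq_norm,
      ← norm_toLp_mulVec_of_mem_orthogonalGroup hRc.1, EuclideanSpace.real_inner_toLp_toLp,
      dotProduct_mulVec, vecMul_transpose]
  have hxu : angle x u ≤ n_r := (angle_toLp_mulVec_le_rotDist hR hRc hp).trans hd
  have hxw : |angle x w - θ| ≤ n_r := by
    rw [hθu, abs_sub_le_iff]
    constructor <;> linarith [angle_le_angle_add_angle x u w, angle_le_angle_add_angle u x w,
      angle_comm x u]
  have hcos := Real.cos_mem_Icc_of_abs_sub_le (angle_nonneg x w) (angle_le_pi x w) hxw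
  have hlaw : enorm3 (R *ᵥ p - q) ^ 2 =
      ‖x‖ ^ 2 + ‖w‖ ^ 2 - 2 * ‖x‖ * ‖w‖ * Real.cos (angle x w) := by
    rw [enorm3_eq_norm, toLp_sub, sq, sq, sq,
      norm_sub_sq_eq_norm_sq_add_norm_sq_sub_two_mul_norm_mul_norm_mul_cos_angle]
  rw [hlaw, enorm3_eq_norm p, ← norm_toLp_mulVec_of_mem_orthogonalGroup hR.1, enorm3_eq_norm q]
  have hnorms : 0 ≤ 2 * ‖x‖ * ‖w‖ := by positivity
  exact ⟨by nlinarith [hcos.2], by nlinarith [hcos.1]⟩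

theorem stmt_4 (p q : Fin 3 → ℝ) (hp : p ≠ 0) (hq : q ≠ 0)
    (Rc : Matrix (Fin 3) (Fin 3) ℝ) (hRc : IsSO3 Rc) (n_r : ℝ) (hn : 0 ≤ n_r)
    (θ : ℝ) (hθ : θ = Real.arccos (p ⬝ᵥ (Rcᵀ.mulVec q) / (enorm3 p * enorm3 q))) :
    ∀ R : Matrix (Fin 3) (Fin 3) ℝ, IsSO3 R → rotDist R Rc ≤ n_r →
      enorm3 (R.mulVec p - q) ^ 2 ∈ Set.Icc
        (enorm3 p ^ 2 + enorm3 q ^ 2 -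
          2 * enorm3 p * enorm3 q * Real.cos (max (θ - n_r) 0))
        (enorm3 p ^ 2 + enorm3 q ^ 2 -
          2 * enorm3 p * enorm3 q * Real.cos (min (θ + n_r) Real.pi)) :=
  stmt_4_general p q hp Rc hRc n_r θ hθ
end

section
/- Given the translation ball B_t = {t : ‖t_c - t‖ ≤ t_r} and the feasible set ℱ = ∪ᵢ {(R,t) : ‖Rp_i - q_i + t‖² ≤ ε²} over SO(2)-type rotations (rotations about a fixed axis), define for each i the angular interval a^i of rotations R with ∠(Rp_i, q_i - t_c) ≤ arccos(min(1, max(-1, h_i))) where h_i = (‖p_i‖² + ‖q_i - t_c‖² - (ε + t_r)²)/(2‖p_i‖‖q_i - t_c‖), and let B_r = ∪ᵢ a^i. Then (B_t × 𝒮) ∩ ℱ = (B_t × B_r) ∩ ℱ, where 𝒮 denotes the full rotation group about the fixed axis. -/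
/-!
If `(R, t)` is feasible for the `i`-th correspondence and `t` lies in the ball, the triangle
inequality gives `‖R pᵢ - (qᵢ - t_c)‖ ≤ ε + t_r`. Since `R` preserves `‖pᵢ‖`, the law of cosines
turns this distance bound into `cos ∠(R pᵢ, qᵢ - t_c) ≥ hᵢ`, i.e. `R ∈ aⁱ`; the clamp to `[-1, 1]`
is harmless because `arccos` is already constant outside that interval.
-/

open Matrix

/-- the angle between two nonzero vectors -/
noncomputable def vecAngle (u v : Fin 3 → ℝ) : ℝ :=
  Real.arccos ((u ⬝ᵥ v) / (enorm3 u * enorm3 v))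

open InnerProductGeometry Real

theorem Real.arccos_min_one_max_neg_one (x : ℝ) : arccos (min 1 (max (-1) x)) = arccos x := by
  rcases le_total x (-1) with hx | hx
  · rw [max_eq_left hx, min_eq_right (by norm_num), arccos_neg_one, arccos_of_le_neg_one hx]
  · rw [max_eq_right hx]
    rcases le_total x 1 with hx' | hx'
    · rw [min_eq_right hx']
    · rw [min_eq_left hx', arccos_one, arccos_of_one_le hx']

/-- For `u = 0` or `v = 0` both sides are `π / 2`, since division by zero gives `0`. -/
theorem InnerProductGeometry.angle_le_arccos_of_norm_sub_le {V : Type*} [NormedAddCommGroup V]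
    [InnerProductSpace ℝ V] {u v : V} {d : ℝ} (h : ‖u - v‖ ≤ d) :
    angle u v ≤ arccos ((‖u‖ ^ 2 + ‖v‖ ^ 2 - d ^ 2) / (2 * ‖u‖ * ‖v‖)) := by
  rcases eq_or_ne u 0 with rfl | hu
  · simp
  rcases eq_or_ne v 0 with rfl | hv
  · simp
  have hsq : ‖u - v‖ ^ 2 ≤ d ^ 2 := pow_le_pow_left₀ (norm_nonneg _) h 2
  have hinner : ‖u‖ ^ 2 + ‖v‖ ^ 2 - d ^ 2 ≤ 2 * inner ℝ u v := by
    linarith [norm_sub_sq_real u v]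
  refine antitone_arccos ?_
  calc (‖u‖ ^ 2 + ‖v‖ ^ 2 - d ^ 2) / (2 * ‖u‖ * ‖v‖)
      ≤ 2 * inner ℝ u v / (2 * ‖u‖ * ‖v‖) := by gcongr
    _ = inner ℝ u v / (‖u‖ * ‖v‖) := by field_simp

theorem enorm3_eq_norm_toLp (v : Fin 3 → ℝ) : enorm3 v = ‖WithLp.toLp 2 v‖ := by
  simp [EuclideanSpace.norm_eq, enorm3]

theorem vecAngle_eq_angle_toLp (u v : Fin 3 → ℝ) :
    vecAngle u v = angle (WithLp.toLp 2 u) (WithLp.toLp 2 v) := by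
  simp [vecAngle, angle, enorm3_eq_norm_toLp, EuclideanSpace.inner_toLp_toLp, dotProduct_comm]

theorem vecAngle_le_arccos_of_enorm3_sub_le {u v : Fin 3 → ℝ} {d : ℝ} (h : enorm3 (u - v) ≤ d) :
    vecAngle u v ≤
      arccos ((enorm3 u ^ 2 + enorm3 v ^ 2 - d ^ 2) / (2 * enorm3 u * enorm3 v)) := by
  rw [enorm3_eq_norm_toLp, WithLp.toLp_sub] at h
  simpa only [vecAngle_eq_angle_toLp, enorm3_eq_norm_toLp] using angle_le_arccos_of_norm_sub_le h

theorem enorm3_add_le (u v : Fin 3 → ℝ) : enorm3 (u + v) ≤ enorm3 u + enorm3 v := by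
  simpa only [enorm3_eq_norm_toLp, WithLp.toLp_add] using norm_add_le _ _

theorem Matrix.mulVec_dotProduct_mulVec_self {ι : Type*} [Fintype ι] [DecidableEq ι]
    {R : Matrix ι ι ℝ} (hR : R ∈ orthogonalGroup ι ℝ) (u : ι → ℝ) :
    R *ᵥ u ⬝ᵥ R *ᵥ u = u ⬝ᵥ u := by
  rw [dotProduct_mulVec, vecMul_mulVec, ← mulVec_transpose, transpose_mul, transpose_transpose,
    (mem_orthogonalGroup_iff' ι ℝ).mp hR, one_mulVec]

theorem enorm3_mulVec_of_mem_orthogonalGroup {R : Matrix (Fin 3) (Fin 3) ℝ}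
    (hR : R ∈ orthogonalGroup (Fin 3) ℝ) (u : Fin 3 → ℝ) : enorm3 (R *ᵥ u) = enorm3 u := by
  have hsum (v : Fin 3 → ℝ) : ∑ i, v i ^ 2 = v ⬝ᵥ v := by simp [dotProduct, sq]
  rw [enorm3, enorm3, hsum, hsum, mulVec_dotProduct_mulVec_self hR]

theorem stmt_10_general (N : ℕ) (p q : Fin N → (Fin 3 → ℝ)) (t_c : Fin 3 → ℝ)
    (ε t_r : ℝ) (hε : 0 < ε)
    (n : Fin 3 → ℝ)
    -- 𝒮: the full group of rotations about the fixed axis n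
    (𝒮 : Set (Matrix (Fin 3) (Fin 3) ℝ))
    (h𝒮 : 𝒮 = {R | IsSO3 R ∧ R.mulVec n = n})
    (Bt : Set (Fin 3 → ℝ)) (hBt : Bt = {t | enorm3 (t_c - t) ≤ t_r})
    (ℱ : Set (Matrix (Fin 3) (Fin 3) ℝ × (Fin 3 → ℝ)))
    (hℱ : ℱ = ⋃ i, {T | enorm3 (T.1.mulVec (p i) - q i + T.2) ^ 2 ≤ ε ^ 2})
    (h_ : Fin N → ℝ)
    (hh : ∀ i, h_ i = (enorm3 (p i) ^ 2 + enorm3 (q i - t_c) ^ 2 - (ε + t_r) ^ 2) /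
      (2 * enorm3 (p i) * enorm3 (q i - t_c)))
    (a : Fin N → Set (Matrix (Fin 3) (Fin 3) ℝ))
    (ha : ∀ i, a i = {R ∈ 𝒮 | vecAngle (R.mulVec (p i)) (q i - t_c) ≤
      Real.arccos (min 1 (max (-1) (h_ i)))})
    (Br : Set (Matrix (Fin 3) (Fin 3) ℝ)) (hBr : Br = ⋃ i, a i) :
    (𝒮 ×ˢ Bt) ∩ ℱ = (Br ×ˢ Bt) ∩ ℱ := by
  have hBr𝒮 : Br ⊆ 𝒮 := by
    simp only [hBr, ha]
    exact Set.iUnion_subset fun i => Set.sep_subset _ _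
  refine Set.Subset.antisymm ?_ (Set.inter_subset_inter_left _ (Set.prod_mono hBr𝒮 le_rfl))
  rintro ⟨R, t⟩ ⟨⟨hR, ht⟩, hF⟩
  refine ⟨⟨?_, ht⟩, hF⟩
  rw [hℱ, Set.mem_iUnion] at hF
  obtain ⟨i, hFi⟩ := hF
  have hRt : enorm3 (R *ᵥ p i - q i + t) ≤ ε :=
    (sq_le_sq₀ (Real.sqrt_nonneg _) hε.le).mp hFi
  rw [hBt] at ht
  have hdist : enorm3 (R *ᵥ p i - (q i - t_c)) ≤ ε + t_r := by
    rw [show R *ᵥ p i - (q i - t_c) = (R *ᵥ p i - q i + t) + (t_c - t) by abel]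
    exact (enorm3_add_le _ _).trans (add_le_add hRt ht)
  have hRO : R ∈ orthogonalGroup (Fin 3) ℝ := by
    rw [h𝒮] at hR
    exact hR.1.1
  rw [hBr, Set.mem_iUnion]
  refine ⟨i, ?_⟩
  rw [ha i]
  refine ⟨hR, ?_⟩
  rw [Real.arccos_min_one_max_neg_one, hh i, ← enorm3_mulVec_of_mem_orthogonalGroup hRO (p i)]
  exact vecAngle_le_arccos_of_enorm3_sub_le hdist

theorem stmt_10 (N : ℕ) (p q : Fin N → (Fin 3 → ℝ)) (t_c : Fin 3 → ℝ)
    (ε t_r : ℝ) (hε : 0 < ε) (ht : 0 ≤ t_r)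
    (hp : ∀ i, p i ≠ 0) (hb : ∀ i, q i - t_c ≠ 0)
    (n : Fin 3 → ℝ) (hn : enorm3 n = 1)
    -- 𝒮: the full group of rotations about the fixed axis n
    (𝒮 : Set (Matrix (Fin 3) (Fin 3) ℝ))
    (h𝒮 : 𝒮 = {R | IsSO3 R ∧ R.mulVec n = n})
    (Bt : Set (Fin 3 → ℝ)) (hBt : Bt = {t | enorm3 (t_c - t) ≤ t_r})
    (ℱ : Set (Matrix (Fin 3) (Fin 3) ℝ × (Fin 3 → ℝ)))
    (hℱ : ℱ = ⋃ i, {T | enorm3 (T.1.mulVec (p i) - q i + T.2) ^ 2 ≤ ε ^ 2})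
    (h_ : Fin N → ℝ)
    (hh : ∀ i, h_ i = (enorm3 (p i) ^ 2 + enorm3 (q i - t_c) ^ 2 - (ε + t_r) ^ 2) /
      (2 * enorm3 (p i) * enorm3 (q i - t_c)))
    (a : Fin N → Set (Matrix (Fin 3) (Fin 3) ℝ))
    (ha : ∀ i, a i = {R ∈ 𝒮 | vecAngle (R.mulVec (p i)) (q i - t_c) ≤
      Real.arccos (min 1 (max (-1) (h_ i)))})
    (Br : Set (Matrix (Fin 3) (Fin 3) ℝ)) (hBr : Br = ⋃ i, a i) :
    (𝒮 ×ˢ Bt) ∩ ℱ = (Br ×ˢ Bt) ∩ ℱ :=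
  stmt_10_general N p q t_c ε t_r hε n 𝒮 h𝒮 Bt hBt ℱ hℱ h_ hh a ha Br hBr
end
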